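/- Let G be an r-regular graph on n vertices and m edges with m ≥ n, and let p, q ≥ 1. Then the adjacency spectrum of G ⊟ K_{p,q} consists of: 0 repeated (p+q−1)m − n times; ±√(pq), each repeated m − n times; and for each j = 1,…,n, the four roots of x⁴ − [pq + (1+p+q)(λ_j(G)+r)]x² − 2pq(λ_j(G)+r)x + pq(λ_j(G)+r) = 0. -/

import Mathlib

open scoped Classical

/-- The subdivision-edge neighbourhood corona `G₁ ⊟ G₂`. -/
def sencCorona {V₁ V₂ : Type*} (G₁ : SimpleGraph V₁) (G₂ : SimpleGraph V₂) :
    SimpleGraph (V₁ ⊕ (↑G₁.edgeSet ⊕ ↑G₁.edgeSet × V₂)) :=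
  SimpleGraph.fromRel (fun a b =>
    (∃ v e, a = Sum.inl v ∧ b = Sum.inr (Sum.inl e) ∧ v ∈ (e : Sym2 V₁)) ∨
    (∃ v e u, a = Sum.inl v ∧ b = Sum.inr (Sum.inr (e, u)) ∧ v ∈ (e : Sym2 V₁)) ∨
    (∃ e u w, a = Sum.inr (Sum.inr (e, u)) ∧ b = Sum.inr (Sum.inr (e, w)) ∧ G₂.Adj u w))

open Matrix

section AdjLemmas
variable {V₁ V₂ : Type*} (G : SimpleGraph V₁) (G₂ : SimpleGraph V₂)

lemma senc_a (v v' : V₁) : ¬ (sencCorona G G₂).Adj (Sum.inl v) (Sum.inl v') := by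
  simp [sencCorona, SimpleGraph.fromRel_adj]

lemma senc_b (v : V₁) (e : ↑G.edgeSet) :
    (sencCorona G G₂).Adj (Sum.inl v) (Sum.inr (Sum.inl e)) ↔ v ∈ (e : Sym2 V₁) := by
  simp [sencCorona, SimpleGraph.fromRel_adj]

lemma senc_c (v : V₁) (e : ↑G.edgeSet) (u : V₂) :
    (sencCorona G G₂).Adj (Sum.inl v) (Sum.inr (Sum.inr (e, u))) ↔ v ∈ (e : Sym2 V₁) := by
  simp [sencCorona, SimpleGraph.fromRel_adj, Prod.ext_iff]

lemma senc_d (e e' : ↑G.edgeSet) :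
    ¬ (sencCorona G G₂).Adj (Sum.inr (Sum.inl e)) (Sum.inr (Sum.inl e')) := by
  simp [sencCorona, SimpleGraph.fromRel_adj]

lemma senc_e (e e' : ↑G.edgeSet) (u : V₂) :
    ¬ (sencCorona G G₂).Adj (Sum.inr (Sum.inl e)) (Sum.inr (Sum.inr (e', u))) := by
  simp [sencCorona, SimpleGraph.fromRel_adj, Prod.ext_iff]

lemma senc_f (e e' : ↑G.edgeSet) (u u' : V₂) :
    (sencCorona G G₂).Adj (Sum.inr (Sum.inr (e, u))) (Sum.inr (Sum.inr (e', u')))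
      ↔ e = e' ∧ G₂.Adj u u' := by
  constructor
  · rintro ⟨hne, (h | h | h) | (h | h | h)⟩
    · obtain ⟨_, _, h1, _⟩ := h; exact absurd h1 (by simp)
    · obtain ⟨_, _, _, h1, _⟩ := h; exact absurd h1 (by simp)
    · obtain ⟨e0, u0, w0, h1, h2, h3⟩ := h
      simp only [Sum.inr.injEq, Prod.mk.injEq] at h1 h2
      obtain ⟨he1, hu1⟩ := h1; obtain ⟨he2, hu2⟩ := h2
      subst he1 hu1 he2 hu2; exact ⟨rfl, h3⟩
    · obtain ⟨_, _, h1, _⟩ := h; exact absurd h1 (by simp)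
    · obtain ⟨_, _, _, h1, _⟩ := h; exact absurd h1 (by simp)
    · obtain ⟨e0, u0, w0, h1, h2, h3⟩ := h
      simp only [Sum.inr.injEq, Prod.mk.injEq] at h1 h2
      obtain ⟨he1, hu1⟩ := h1; obtain ⟨he2, hu2⟩ := h2
      subst he1 hu1 he2 hu2; exact ⟨rfl, h3.symm⟩
  · rintro ⟨rfl, h⟩
    exact ⟨by simp [h.ne], Or.inl (Or.inr (Or.inr ⟨e, u, u', rfl, rfl, h⟩))⟩

lemma senc_b' (v : V₁) (e : ↑G.edgeSet) :
    (sencCorona G G₂).Adj (Sum.inr (Sum.inl e)) (Sum.inl v) ↔ v ∈ (e : Sym2 V₁) := by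
  rw [(sencCorona G G₂).adj_comm, senc_b]

lemma senc_c' (v : V₁) (e : ↑G.edgeSet) (u : V₂) :
    (sencCorona G G₂).Adj (Sum.inr (Sum.inr (e, u))) (Sum.inl v) ↔ v ∈ (e : Sym2 V₁) := by
  rw [(sencCorona G G₂).adj_comm, senc_c]

lemma senc_e' (e e' : ↑G.edgeSet) (u : V₂) :
    ¬ (sencCorona G G₂).Adj (Sum.inr (Sum.inr (e', u))) (Sum.inr (Sum.inl e)) := by
  rw [(sencCorona G G₂).adj_comm]; exact senc_e G G₂ e e' u

end AdjLemmas

section Kpq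
variable (p q : ℕ)

noncomputable def Cmat : Matrix (Fin p ⊕ Fin q) (Fin p ⊕ Fin q) ℝ :=
  (completeBipartiteGraph (Fin p) (Fin q)).adjMatrix ℝ

lemma Cmat_apply (w w' : Fin p ⊕ Fin q) : Cmat p q w w' =
    Sum.elim (fun _ => Sum.elim (fun _ => (0:ℝ)) (fun _ => 1) w')
      (fun _ => Sum.elim (fun _ => (1:ℝ)) (fun _ => 0) w') w := by
  cases w <;> cases w' <;> simp [Cmat, SimpleGraph.adjMatrix_apply]

noncomputable def Mpoly (x : ℝ) : Matrix (Fin p ⊕ Fin q) (Fin p ⊕ Fin q) ℝ := fun w w' =>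
  match w, w' with
  | Sum.inl i, Sum.inl i' => (if i = i' then x^2 - p*q else 0) + q
  | Sum.inl _, Sum.inr _ => x
  | Sum.inr _, Sum.inl _ => x
  | Sum.inr j, Sum.inr j' => (if j = j' then x^2 - p*q else 0) + p

lemma Mpoly_mul {x : ℝ} :
    (x • (1 : Matrix (Fin p ⊕ Fin q) (Fin p ⊕ Fin q) ℝ) - Cmat p q) * Mpoly p q x
      = (x * (x^2 - p*q)) • 1 := by
  ext w w'
  rw [Matrix.mul_apply, Fintype.sum_sum_type]
  cases w <;> cases w' <;>
    simp only [Mpoly, Cmat_apply, Matrix.sub_apply, Matrix.smul_apply, Matrix.one_apply,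
      Sum.elim_inl, Sum.elim_inr, Sum.inl.injEq, Sum.inr.injEq, smul_eq_mul,
      if_false, reduceCtorEq, mul_zero, zero_mul, mul_one, one_mul, mul_add, add_mul, sub_mul,
      mul_sub, neg_mul, mul_neg, neg_neg, ite_mul, mul_ite,
      Finset.sum_add_distrib, Finset.sum_sub_distrib, Finset.sum_neg_distrib,
      Finset.sum_const, Finset.card_univ, Fintype.card_fin, nsmul_eq_mul,
      Finset.sum_ite_eq', Finset.sum_ite_eq, Finset.mem_univ, if_true, sub_zero, zero_sub] <;>
    (first | (split_ifs <;> ring) | ring)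

lemma Mpoly_sum (x : ℝ) :
    ∑ w : Fin p ⊕ Fin q, ∑ w' : Fin p ⊕ Fin q, Mpoly p q x w w'
      = (p+q)*x^2 + 2*p*q*x := by
  rw [Fintype.sum_sum_type]
  simp only [Fintype.sum_sum_type, Mpoly, Finset.sum_add_distrib, Finset.sum_const,
    Finset.card_univ, Fintype.card_fin, nsmul_eq_mul, Finset.sum_ite_eq', Finset.sum_ite_eq,
    Finset.mem_univ, if_true]
  ring

lemma det_xC {x : ℝ} (hx : x ≠ 0) :
    (x • (1 : Matrix (Fin p ⊕ Fin q) (Fin p ⊕ Fin q) ℝ) - Cmat p q).det * x^2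
      = x^(p+q) * (x^2 - p*q) := by
  have hJ : x • (1 : Matrix (Fin p ⊕ Fin q) (Fin p ⊕ Fin q) ℝ) - Cmat p q =
      Matrix.fromBlocks (x • 1) (-(Matrix.of fun _ _ => (1:ℝ)))
        (-(Matrix.of fun _ _ => (1:ℝ))) (x • 1) := by
    ext w w'
    cases w <;> cases w' <;>
      simp [Cmat_apply, Matrix.one_apply, Sum.inl.injEq, Sum.inr.injEq]
  have hinv : (x • (1 : Matrix (Fin q) (Fin q) ℝ)) * (x⁻¹ • 1) = 1 := by
    rw [smul_mul_smul_comm, one_mul, mul_inv_cancel₀ hx, one_smul]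
  letI : Invertible (x • (1 : Matrix (Fin q) (Fin q) ℝ)) :=
    invertibleOfRightInverse _ _ hinv
  rw [hJ, Matrix.det_fromBlocks₂₂, invOf_eq_right_inv hinv]
  have hprod : (-(Matrix.of fun _ _ => (1:ℝ)) : Matrix (Fin p) (Fin q) ℝ) *
      (x⁻¹ • (1 : Matrix (Fin q) (Fin q) ℝ)) *
      (-(Matrix.of fun _ _ => (1:ℝ)) : Matrix (Fin q) (Fin p) ℝ)
      = Matrix.replicateCol Unit (fun _ => (q:ℝ) * x⁻¹) * Matrix.replicateRow Unit (fun _ => (1:ℝ)) := by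
    rw [Matrix.mul_smul, Matrix.mul_one, Matrix.smul_mul]
    ext i j
    simp [Matrix.mul_apply, Matrix.smul_apply, Finset.mul_sum, mul_comm]
  have hschur : x • (1 : Matrix (Fin p) (Fin p) ℝ) -
      ((-(Matrix.of fun _ _ => (1:ℝ)) : Matrix (Fin p) (Fin q) ℝ) *
        (x⁻¹ • (1 : Matrix (Fin q) (Fin q) ℝ)) *
        (-(Matrix.of fun _ _ => (1:ℝ)) : Matrix (Fin q) (Fin p) ℝ))
      = x • ((1 : Matrix (Fin p) (Fin p) ℝ) + Matrix.replicateCol Unit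
      (fun _ => -((q:ℝ) * x⁻¹ * x⁻¹)) * Matrix.replicateRow Unit (fun _ => (1:ℝ))) := by
    rw [hprod]
    ext i j
    simp only [Matrix.sub_apply, Matrix.add_apply, Matrix.smul_apply, Matrix.mul_apply,
      Matrix.one_apply, Matrix.replicateCol_apply, Matrix.replicateRow_apply, smul_eq_mul, mul_add, mul_one,
      Finset.sum_const, Finset.card_univ, Fintype.card_unit, one_smul]
    split_ifs <;> field_simp <;> ring
  rw [hschur, Matrix.det_smul, Matrix.det_smul, Matrix.det_one, Matrix.det_one_add_replicateCol_mul_replicateRow]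
  simp only [dotProduct, Finset.sum_const, Finset.card_univ, Fintype.card_fin,
    nsmul_eq_mul, mul_one]
  field_simp
  ring

end Kpq

section GG
variable {V : Type*} [Fintype V] (G : SimpleGraph V) (p q : ℕ)

noncomputable def Bmat : Matrix V ↑G.edgeSet ℝ := fun v e => if v ∈ (e : Sym2 V) then 1 else 0

noncomputable def Kmat : Matrix V (↑G.edgeSet × (Fin p ⊕ Fin q)) ℝ :=
  fun v ew => if v ∈ (ew.1 : Sym2 V) then 1 else 0

noncomputable def DCm (x : ℝ) :
    Matrix (↑G.edgeSet × (Fin p ⊕ Fin q)) (↑G.edgeSet × (Fin p ⊕ Fin q)) ℝ :=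
  fun a b => if a.1 = b.1
    then (x • (1 : Matrix (Fin p ⊕ Fin q) (Fin p ⊕ Fin q) ℝ) - Cmat p q) a.2 b.2 else 0

noncomputable def DMm (x : ℝ) :
    Matrix (↑G.edgeSet × (Fin p ⊕ Fin q)) (↑G.edgeSet × (Fin p ⊕ Fin q)) ℝ :=
  fun a b => if a.1 = b.1 then Mpoly p q x a.2 b.2 else 0

lemma Bmat_eq_inc (v : V) (e : ↑G.edgeSet) : Bmat G v e = G.incMatrix ℝ v e.val := by
  rw [Bmat, SimpleGraph.incMatrix_apply]
  simp [Set.indicator_apply, SimpleGraph.incidenceSet, e.2]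

lemma Bmat_mul_transpose {r : ℕ} (hreg : G.IsRegularOfDegree r) :
    Bmat G * (Bmat G)ᵀ = G.adjMatrix ℝ + (r : ℝ) • 1 := by
  have key : G.incMatrix ℝ * (G.incMatrix ℝ)ᵀ = fun a b =>
      if a = b then (G.degree a : ℝ) else if G.Adj a b then 1 else 0 :=
    SimpleGraph.incMatrix_mul_transpose G
  ext a b
  have h1 : (Bmat G * (Bmat G)ᵀ) a b = (G.incMatrix ℝ * (G.incMatrix ℝ)ᵀ) a b := by
    rw [Matrix.mul_apply, Matrix.mul_apply]
    simp_rw [Matrix.transpose_apply, Bmat_eq_inc]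
    rw [← Finset.sum_subtype (Set.toFinset G.edgeSet) (fun x => Set.mem_toFinset)
      (fun e => G.incMatrix ℝ a e * G.incMatrix ℝ b e)]
    apply Finset.sum_subset (Finset.subset_univ _)
    intro e _ he
    have : e ∉ G.edgeSet := by simpa [Set.mem_toFinset] using he
    rw [SimpleGraph.incMatrix_of_notMem_incidenceSet, zero_mul]
    exact fun hmem => this hmem.1
  rw [h1, key]
  by_cases hab : a = b
  · subst hab; simp [hreg a, SimpleGraph.irrefl]
  · simp [hab, Matrix.one_apply, Ne.symm hab]

lemma adj_decomp (x : ℝ) :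
    x • (1 : Matrix (V ⊕ (↑G.edgeSet ⊕ ↑G.edgeSet × (Fin p ⊕ Fin q)))
        (V ⊕ (↑G.edgeSet ⊕ ↑G.edgeSet × (Fin p ⊕ Fin q))) ℝ)
      - (sencCorona G (completeBipartiteGraph (Fin p) (Fin q))).adjMatrix ℝ
    = Matrix.fromBlocks (x • 1)
        (Matrix.fromCols (-(Bmat G)) (-(Kmat G p q)))
        (Matrix.fromRows (-(Bmat G)ᵀ) (-(Kmat G p q)ᵀ))
        (Matrix.fromBlocks (x • 1) 0 0 (DCm G p q x)) := by
  ext a b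
  rcases a with v | e | ⟨e, w⟩ <;> rcases b with v' | e' | ⟨e', w'⟩ <;>
    simp only [Matrix.sub_apply, Matrix.smul_apply, Matrix.one_apply, smul_eq_mul,
      SimpleGraph.adjMatrix_apply, Matrix.fromBlocks_apply₁₁, Matrix.fromBlocks_apply₁₂,
      Matrix.fromBlocks_apply₂₁, Matrix.fromBlocks_apply₂₂, Matrix.fromCols_apply_inl,
      Matrix.fromCols_apply_inr, Matrix.fromRows_apply_inl, Matrix.fromRows_apply_inr,
      Matrix.neg_apply, Matrix.transpose_apply, Matrix.zero_apply, Sum.inl.injEq,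
      Sum.inr.injEq, reduceCtorEq, if_false, mul_zero, mul_one]
  · simp [senc_a G _ v v']
  · simp [senc_b, Bmat]
  · simp [senc_c, Kmat]
  · simp [senc_b', Bmat]
  · simp [senc_d G _ e e', Matrix.one_apply]
  · simp [senc_e G _ e e' w']
  · simp [senc_c', Kmat]
  · simp [senc_e' G _ e' e w]
  · by_cases hee : e = e' <;> by_cases hww : w = w' <;>
      simp [senc_f, hee, hww, DCm, Cmat, Matrix.one_apply, Prod.ext_iff,
        SimpleGraph.irrefl]

lemma DCm_sub (x : ℝ) : DCm G p q x =
    (Matrix.blockDiagonal fun _ : ↑G.edgeSet =>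
      (x • (1 : Matrix (Fin p ⊕ Fin q) (Fin p ⊕ Fin q) ℝ) - Cmat p q)).submatrix
      (Equiv.prodComm _ _) (Equiv.prodComm _ _) := by
  ext ⟨e, w⟩ ⟨e', w'⟩
  simp [DCm, Matrix.blockDiagonal_apply, Equiv.prodComm]

lemma DMm_sub (x : ℝ) : DMm G p q x =
    (Matrix.blockDiagonal fun _ : ↑G.edgeSet => Mpoly p q x).submatrix
      (Equiv.prodComm _ _) (Equiv.prodComm _ _) := by
  ext ⟨e, w⟩ ⟨e', w'⟩
  simp [DMm, Matrix.blockDiagonal_apply, Equiv.prodComm]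

lemma DC_mul_DM (x : ℝ) :
    DCm G p q x * DMm G p q x = (x * (x^2 - p*q)) • 1 := by
  rw [DCm_sub, DMm_sub, Matrix.submatrix_mul_equiv, ← Matrix.blockDiagonal_mul]
  have h : (fun k : ↑G.edgeSet =>
      (x • (1 : Matrix (Fin p ⊕ Fin q) (Fin p ⊕ Fin q) ℝ) - Cmat p q) * Mpoly p q x)
      = (x * (x^2 - p*q)) •
        (1 : ↑G.edgeSet → Matrix (Fin p ⊕ Fin q) (Fin p ⊕ Fin q) ℝ) :=
    funext fun _ => Mpoly_mul p q
  rw [h, Matrix.blockDiagonal_smul, Matrix.blockDiagonal_one]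
  ext a b
  simp [Matrix.submatrix_apply, Matrix.smul_apply, Matrix.one_apply,
    Equiv.apply_eq_iff_eq]

lemma det_DCm (x : ℝ) : (DCm G p q x).det =
    ((x • (1 : Matrix (Fin p ⊕ Fin q) (Fin p ⊕ Fin q) ℝ) - Cmat p q)).det
      ^ (Fintype.card ↑G.edgeSet) := by
  rw [DCm_sub]
  rw [show ((Matrix.blockDiagonal fun _ : ↑G.edgeSet =>
      (x • (1 : Matrix (Fin p ⊕ Fin q) (Fin p ⊕ Fin q) ℝ) - Cmat p q)).submatrix
      (Equiv.prodComm _ _) (Equiv.prodComm _ _)).det = _ from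
    Matrix.det_submatrix_equiv_self _ _, Matrix.det_blockDiagonal]
  simp

lemma KDK (x : ℝ) :
    Kmat G p q * DMm G p q x * (Kmat G p q)ᵀ
      = ((p+q)*x^2 + 2*p*q*x) • (Bmat G * (Bmat G)ᵀ) := by
  have hKD : Kmat G p q * DMm G p q x = Matrix.of fun v ew =>
      Bmat G v ew.1 * ∑ w : Fin p ⊕ Fin q, Mpoly p q x w ew.2 := by
    ext v ⟨e', w'⟩
    rw [Matrix.mul_apply, Fintype.sum_prod_type]
    rw [Finset.sum_eq_single e']
    · simp [Kmat, DMm, Bmat, Finset.mul_sum]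
    · intro b _ hb
      simp [DMm, hb]
    · simp
  rw [hKD]
  ext v v'
  rw [Matrix.mul_apply, Fintype.sum_prod_type]
  simp only [Matrix.of_apply, Matrix.transpose_apply, Matrix.smul_apply,
    Matrix.mul_apply, smul_eq_mul]
  rw [Finset.mul_sum]
  apply Finset.sum_congr rfl
  intro e _
  rw [← Mpoly_sum p q x, Finset.sum_comm (f := fun w w' => Mpoly p q x w w'), Finset.sum_mul]
  apply Finset.sum_congr rfl
  intro w' _
  simp only [Kmat, Bmat]
  ring

end GG

section Main
variable {V : Type*} [Fintype V]

lemma main_good (G : SimpleGraph V) (r p q : ℕ)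
    (hreg : G.IsRegularOfDegree r)
    (hmn : Fintype.card V ≤ Fintype.card ↑G.edgeSet)
    (hp : 1 ≤ p) (hq : 1 ≤ q)
    (lam : ℕ → ℝ)
    (hlam : ∀ x : ℝ, (x • (1 : Matrix V V ℝ) - G.adjMatrix ℝ).det =
      ∏ j ∈ Finset.range (Fintype.card V), (x - lam j))
    {x : ℝ} (hx : x ≠ 0) (hs : x^2 - (p:ℝ)*q ≠ 0)
    (hu : ((p:ℝ)+q+1)*x^2 + 2*p*q*x - p*q ≠ 0) :
    (x • (1 : Matrix _ _ ℝ) -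
        (sencCorona G (completeBipartiteGraph (Fin p) (Fin q))).adjMatrix ℝ).det =
      x ^ ((p + q - 1) * Fintype.card ↑G.edgeSet - Fintype.card V) *
      (x - Real.sqrt (p * q)) ^ (Fintype.card ↑G.edgeSet - Fintype.card V) *
      (x + Real.sqrt (p * q)) ^ (Fintype.card ↑G.edgeSet - Fintype.card V) *
      ∏ j ∈ Finset.range (Fintype.card V),
        (x ^ 4 - ((p : ℝ) * q + (1 + p + q) * (lam j + r)) * x ^ 2
          - 2 * p * q * (lam j + r) * x + p * q * (lam j + r)) := by
  set n := Fintype.card V with hn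
  set m := Fintype.card ↑G.edgeSet with hm
  set s : ℝ := x^2 - (p:ℝ)*q with hsdef
  have hxs : x * s ≠ 0 := mul_ne_zero hx hs
  set Sm : ℝ := ((p:ℝ)+q)*x^2 + 2*p*q*x with hSm
  set t : ℝ := x⁻¹ + (x*s)⁻¹ * Sm with htdef
  have ht : t * (x*s) = ((p:ℝ)+q+1)*x^2 + 2*p*q*x - p*q := by
    rw [htdef, hSm, hsdef]
    field_simp [show x^2 - (p:ℝ)*q ≠ 0 by rwa [hsdef] at hs]
    ring
  have htne : t ≠ 0 := by
    intro h
    rw [h, zero_mul] at ht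
    exact hu ht.symm
  clear_value t
  clear_value Sm
  -- the Y block and its inverse
  have hYinv : (Matrix.fromBlocks (x • 1) 0 0 (DCm G p q x) :
        Matrix (↑G.edgeSet ⊕ ↑G.edgeSet × (Fin p ⊕ Fin q))
          (↑G.edgeSet ⊕ ↑G.edgeSet × (Fin p ⊕ Fin q)) ℝ) *
      (Matrix.fromBlocks (x⁻¹ • 1) 0 0 ((x*s)⁻¹ • DMm G p q x)) = 1 := by
    rw [Matrix.fromBlocks_multiply]
    simp only [Matrix.mul_zero, Matrix.zero_mul, add_zero, zero_add, Matrix.mul_smul,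
      Matrix.mul_one, DC_mul_DM, smul_smul, ← hsdef, inv_mul_cancel₀ hx,
      inv_mul_cancel₀ hxs, one_smul]
    simp [Matrix.fromBlocks_one]
  letI : Invertible (Matrix.fromBlocks (x • 1) 0 0 (DCm G p q x) :
      Matrix (↑G.edgeSet ⊕ ↑G.edgeSet × (Fin p ⊕ Fin q))
        (↑G.edgeSet ⊕ ↑G.edgeSet × (Fin p ⊕ Fin q)) ℝ) :=
    invertibleOfRightInverse _ _ hYinv
  rw [adj_decomp, Matrix.det_fromBlocks₂₂, invOf_eq_right_inv hYinv]
  -- Schur complement equals x•1 - t•(A + r•1)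
  have hU : Matrix.fromCols (-(Bmat G)) (-(Kmat G p q)) *
      (Matrix.fromBlocks (x⁻¹ • 1) 0 0 ((x*s)⁻¹ • DMm G p q x) : Matrix (↑G.edgeSet ⊕ ↑G.edgeSet × (Fin p ⊕ Fin q)) (↑G.edgeSet ⊕ ↑G.edgeSet × (Fin p ⊕ Fin q)) ℝ) *
      Matrix.fromRows (-(Bmat G)ᵀ) (-(Kmat G p q)ᵀ)
      = t • (Bmat G * (Bmat G)ᵀ) := by
    rw [Matrix.fromCols_mul_fromBlocks, Matrix.fromCols_mul_fromRows]
    rw [Matrix.mul_smul]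
    simp only [Matrix.mul_zero, Matrix.zero_mul, add_zero, zero_add,
      Matrix.mul_smul, Matrix.mul_one, Matrix.neg_mul, Matrix.mul_neg, neg_neg,
      Matrix.smul_mul, smul_neg]
    rw [Matrix.mul_assoc, ← Matrix.mul_assoc (Kmat G p q)]
    rw [KDK, smul_smul, htdef, add_smul, ← hSm]
  rw [hU, Bmat_mul_transpose G hreg]
  -- determinant of the Schur complement
  have hc : t * ((x - t*r)/t) = x - t*r := by field_simp
  have hmat : x • (1 : Matrix V V ℝ) - t • (G.adjMatrix ℝ + (r:ℝ) • 1)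
      = t • (((x - t*r)/t) • 1 - G.adjMatrix ℝ) := by
    rw [smul_sub, smul_smul, hc, smul_add, smul_smul, sub_smul]
    abel
  rw [hmat, Matrix.det_smul, hlam]
  -- determinant of Y
  rw [Matrix.det_fromBlocks_zero₁₂, det_DCm, Matrix.det_smul, Matrix.det_one]
  simp only [← hm, ← hn, mul_one]
  -- now pure scalar algebra
  have hprod1 : (t ^ n) * ∏ j ∈ Finset.range n, ((x - t*r)/t - lam j)
      = ∏ j ∈ Finset.range n, (x - t*(lam j + r)) := by
    rw [show t ^ n = ∏ _j ∈ Finset.range n, t by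
      rw [Finset.prod_const, Finset.card_range], ← Finset.prod_mul_distrib]
    refine Finset.prod_congr rfl fun j _ => ?_
    rw [mul_sub, hc]
    ring
  have hq1 : (∏ j ∈ Finset.range n, (x - t*(lam j + r))) * (x*s)^n
      = ∏ j ∈ Finset.range n,
        (x ^ 4 - ((p : ℝ) * q + (1 + p + q) * (lam j + r)) * x ^ 2
          - 2 * p * q * (lam j + r) * x + p * q * (lam j + r)) := by
    rw [show (x*s)^n = ∏ _j ∈ Finset.range n, (x*s) by
      rw [Finset.prod_const, Finset.card_range], ← Finset.prod_mul_distrib]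
    refine Finset.prod_congr rfl fun j _ => ?_
    rw [hsdef]
    linear_combination (-(lam j) - (r:ℝ)) * ht
  have hsq : Real.sqrt ((p:ℝ) * q) ^ 2 = (p:ℝ)*q := Real.sq_sqrt (by positivity)
  have hsplit : (x - Real.sqrt ((p:ℝ)*q))^(m-n) * (x + Real.sqrt ((p:ℝ)*q))^(m-n)
      = s^(m-n) := by
    rw [← mul_pow, hsdef]
    congr 1
    linear_combination -hsq
  have h1 : n ≤ (p+q-1)*m := le_trans hmn (le_trans (le_of_eq (one_mul m).symm)
    (Nat.mul_le_mul_right m (by omega)))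
  have hsm : (p+q)*m = (p+q-1)*m + m := by
    conv_lhs => rw [show p + q = (p+q-1) + 1 by omega]
    rw [Nat.succ_mul]
  have hpow : x^m * ((x • (1 : Matrix (Fin p ⊕ Fin q) (Fin p ⊕ Fin q) ℝ)
        - Cmat p q).det)^m
      = x^((p+q-1)*m - n) * s^(m-n) * (x*s)^n := by
    apply mul_right_cancel₀ (pow_ne_zero m (pow_ne_zero 2 hx))
    have h2 := det_xC p q hx
    calc x^m * ((x • (1 : Matrix (Fin p ⊕ Fin q) (Fin p ⊕ Fin q) ℝ)
          - Cmat p q).det)^m * (x^2)^m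
        = x^m * ((x • (1 : Matrix (Fin p ⊕ Fin q) (Fin p ⊕ Fin q) ℝ)
          - Cmat p q).det * x^2)^m := by rw [mul_pow]; ring
      _ = x^m * (x^(p+q) * s)^m := by rw [h2, hsdef]
      _ = x^(m + (p+q)*m) * s^m := by rw [mul_pow, ← pow_mul, pow_add]; ring
      _ = x^((p+q-1)*m - n + n + 2*m) * s^(m-n+n) := by
          congr 2
          · omega
          · omega
      _ = x^((p+q-1)*m - n) * s^(m-n) * (x*s)^n * (x^2)^m := by
          rw [pow_add, pow_add, pow_add, mul_pow, ← pow_mul]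
          ring
  calc x ^ m * ((x • (1 : Matrix (Fin p ⊕ Fin q) (Fin p ⊕ Fin q) ℝ)
        - Cmat p q).det)^m * (t ^ n *
          ∏ j ∈ Finset.range n, ((x - t*r)/t - lam j))
      = x ^ m * ((x • (1 : Matrix (Fin p ⊕ Fin q) (Fin p ⊕ Fin q) ℝ)
        - Cmat p q).det)^m * ∏ j ∈ Finset.range n, (x - t*(lam j + r)) := by
          rw [hprod1]
    _ = (x^((p+q-1)*m - n) * s^(m-n) * (x*s)^n) *
          ∏ j ∈ Finset.range n, (x - t*(lam j + r)) := by rw [hpow]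
    _ = x^((p+q-1)*m - n) * s^(m-n) *
          ((∏ j ∈ Finset.range n, (x - t*(lam j + r))) * (x*s)^n) := by ring
    _ = _ := by
        rw [hq1, ← hsplit]
        ring

end Main

theorem stmt18 {V : Type*} [Fintype V] (G : SimpleGraph V) (r p q : ℕ)
    (hreg : G.IsRegularOfDegree r)
    (hmn : Fintype.card V ≤ Fintype.card ↑G.edgeSet)
    (hp : 1 ≤ p) (hq : 1 ≤ q)
    (lam : ℕ → ℝ)
    (hlam : ∀ x : ℝ, (x • (1 : Matrix V V ℝ) - G.adjMatrix ℝ).det =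
      ∏ j ∈ Finset.range (Fintype.card V), (x - lam j)) :
    ∀ x : ℝ, (x • (1 : Matrix _ _ ℝ) -
        (sencCorona G (completeBipartiteGraph (Fin p) (Fin q))).adjMatrix ℝ).det =
      x ^ ((p + q - 1) * Fintype.card ↑G.edgeSet - Fintype.card V) *
      (x - Real.sqrt (p * q)) ^ (Fintype.card ↑G.edgeSet - Fintype.card V) *
      (x + Real.sqrt (p * q)) ^ (Fintype.card ↑G.edgeSet - Fintype.card V) *
      ∏ j ∈ Finset.range (Fintype.card V),
        (x ^ 4 - ((p : ℝ) * q + (1 + p + q) * (lam j + r)) * x ^ 2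
          - 2 * p * q * (lam j + r) * x + p * q * (lam j + r)) := by
  intro x
  set n := Fintype.card V with hn
  set m := Fintype.card ↑G.edgeSet with hm
  set A := (sencCorona G (completeBipartiteGraph (Fin p) (Fin q))).adjMatrix ℝ with hA
  set P : Polynomial ℝ :=
    ((Polynomial.X : Polynomial ℝ) • (1 : Matrix (V ⊕ (↑G.edgeSet ⊕ ↑G.edgeSet × (Fin p ⊕ Fin q)))
      (V ⊕ (↑G.edgeSet ⊕ ↑G.edgeSet × (Fin p ⊕ Fin q))) (Polynomial ℝ))
      - A.map Polynomial.C).det with hP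
  set Q : Polynomial ℝ :=
    Polynomial.X ^ ((p + q - 1) * m - n) *
    (Polynomial.X - Polynomial.C (Real.sqrt (p * q))) ^ (m - n) *
    (Polynomial.X + Polynomial.C (Real.sqrt (p * q))) ^ (m - n) *
    ∏ j ∈ Finset.range n,
      (Polynomial.X ^ 4 - Polynomial.C ((p : ℝ) * q + (1 + p + q) * (lam j + r)) *
          Polynomial.X ^ 2
        - Polynomial.C (2 * p * q * (lam j + r)) * Polynomial.X
        + Polynomial.C ((p : ℝ) * q * (lam j + r))) with hQ
  have hPeval : ∀ y : ℝ, P.eval y = (y • (1 : Matrix _ _ ℝ) - A).det := by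
    intro y
    have h := RingHom.map_det (Polynomial.evalRingHom y)
      ((Polynomial.X : Polynomial ℝ) • (1 : Matrix (V ⊕ (↑G.edgeSet ⊕ ↑G.edgeSet × (Fin p ⊕ Fin q)))
        (V ⊕ (↑G.edgeSet ⊕ ↑G.edgeSet × (Fin p ⊕ Fin q))) (Polynomial ℝ))
        - A.map Polynomial.C)
    rw [hP]
    rw [show ((Polynomial.X : Polynomial ℝ) • (1 : Matrix (V ⊕ (↑G.edgeSet ⊕ ↑G.edgeSet × (Fin p ⊕ Fin q)))
        (V ⊕ (↑G.edgeSet ⊕ ↑G.edgeSet × (Fin p ⊕ Fin q))) (Polynomial ℝ))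
        - A.map Polynomial.C).det.eval y = _ from h]
    congr 1
    ext i j
    simp [Matrix.map_apply, Matrix.sub_apply, Matrix.smul_apply, Matrix.one_apply,
      apply_ite (Polynomial.eval y), smul_eq_mul]
  have hQeval : ∀ y : ℝ, Q.eval y =
      y ^ ((p + q - 1) * m - n) *
      (y - Real.sqrt (p * q)) ^ (m - n) *
      (y + Real.sqrt (p * q)) ^ (m - n) *
      ∏ j ∈ Finset.range n,
        (y ^ 4 - ((p : ℝ) * q + (1 + p + q) * (lam j + r)) * y ^ 2
          - 2 * p * q * (lam j + r) * y + p * q * (lam j + r)) := by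
    intro y
    simp [hQ, Polynomial.eval_prod]
  -- the separating polynomial
  set f : Polynomial ℝ := Polynomial.X * (Polynomial.X ^ 2 - Polynomial.C ((p:ℝ) * q)) *
    (Polynomial.C ((p:ℝ) + q + 1) * Polynomial.X ^ 2 + Polynomial.C (2 * (p:ℝ) * q) *
      Polynomial.X - Polynomial.C ((p:ℝ) * q)) with hfdef
  have hp0 : (0:ℝ) ≤ (p:ℝ) * q := by positivity
  have hf : f ≠ 0 := by
    have h1 : (Polynomial.X : Polynomial ℝ) ≠ 0 := Polynomial.X_ne_zero
    have h2 : (Polynomial.X ^ 2 - Polynomial.C ((p:ℝ) * q)) ≠ 0 := by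
      intro h
      have := congrArg (Polynomial.eval ((p:ℝ) * q + 1)) h
      simp at this
      nlinarith
    have h3 : (Polynomial.C ((p:ℝ) + q + 1) * Polynomial.X ^ 2 + Polynomial.C (2 * (p:ℝ) * q) *
        Polynomial.X - Polynomial.C ((p:ℝ) * q)) ≠ 0 := by
      intro h
      have := congrArg (Polynomial.eval (1:ℝ)) h
      simp at this
      have hp1 : (1:ℝ) ≤ (p:ℝ) := by exact_mod_cast hp
      have hq1 : (1:ℝ) ≤ (q:ℝ) := by exact_mod_cast hq
      nlinarith
    exact mul_ne_zero (mul_ne_zero h1 h2) h3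
  have hsubset : {y : ℝ | ¬ f.IsRoot y} ⊆ {y : ℝ | P.eval y = Q.eval y} := by
    intro y hy
    simp only [Set.mem_setOf_eq, Polynomial.IsRoot, hfdef, Polynomial.eval_mul,
      Polynomial.eval_add, Polynomial.eval_sub, Polynomial.eval_pow, Polynomial.eval_X,
      Polynomial.eval_C] at hy
    have hy1 : y ≠ 0 := fun h => hy (by rw [h]; ring)
    have hy2 : y^2 - (p:ℝ)*q ≠ 0 := fun h => hy (by
      rw [show y * (y^2 - (p:ℝ)*q) * (((p:ℝ)+q+1)*y^2 + 2*(p:ℝ)*q*y - (p:ℝ)*q)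
        = y * (y^2 - (p:ℝ)*q) * (((p:ℝ)+q+1)*y^2 + 2*(p:ℝ)*q*y - (p:ℝ)*q) from rfl, h]
      ring)
    have hy3 : ((p:ℝ)+q+1)*y^2 + 2*(p:ℝ)*q*y - (p:ℝ)*q ≠ 0 := fun h => hy (by rw [h]; ring)
    show P.eval y = Q.eval y
    rw [hPeval, hQeval]
    have := main_good G r p q hreg hmn hp hq lam hlam hy1 hy2 (by
      convert hy3 using 2 <;> ring)
    convert this using 2 <;> try ring
  have hInf : {y : ℝ | P.eval y = Q.eval y}.Infinite := by
    apply Set.Infinite.mono hsubset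
    have := (Polynomial.finite_setOf_isRoot hf).infinite_compl
    rwa [Set.compl_setOf] at this
  have hPQ : P = Q := Polynomial.eq_of_infinite_eval_eq P Q hInf
  rw [← hPeval x, hPQ, hQeval x]
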